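/- arXiv:2411.00280 — 3 statements merged into one kernel-verified Lean document; each statement's English description precedes it below -/
import Mathlib

section
/- For every real x > 0, setting q = e^{-x}, one has x·[2·coth(x/2) - 1 - 4·∑_{n=1}^∞ sinh(x)/(cosh(4nx) - cosh(x))] = x·[1 + 4·∑_{n=1}^∞ (q^{4n-3}/(1-q^{4n-3}) - q^{4n-1}/(1-q^{4n-1}))]. -/
open Real Filter

lemma L_pos_den (q : ℝ) (hq0 : 0 < q) (hq1 : q < 1) (m : ℕ) (hm : 1 ≤ m) :
    0 < 1 - q ^ m := by
  have := pow_le_pow_of_le_one hq0.le hq1.le hm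
  rw [pow_one] at this
  linarith

lemma L_summable (q : ℝ) (hq0 : 0 < q) (hq1 : q < 1) (b : ℕ) (hb : 1 ≤ b) :
    Summable (fun n : ℕ => q ^ (4 * n + b) / (1 - q ^ (4 * n + b))) := by
  have hgeo : Summable (fun n : ℕ => (q ^ 4) ^ n * (q ^ b / (1 - q))) :=
    (summable_geometric_of_lt_one (by positivity) (by
      calc q ^ 4 ≤ q ^ 1 := pow_le_pow_of_le_one hq0.le hq1.le (by norm_num)
      _ < 1 := by rwa [pow_one])).mul_right _
  refine Summable.of_nonneg_of_le (fun n => ?_) (fun n => ?_) hgeo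
  · have h1 := L_pos_den q hq0 hq1 (4 * n + b) (by omega)
    positivity
  · have h1 := L_pos_den q hq0 hq1 (4 * n + b) (by omega)
    have h2 : q ^ (4 * n + b) = (q ^ 4) ^ n * q ^ b := by
      rw [← pow_mul, ← pow_add]
    rw [h2, mul_div_assoc]
    refine mul_le_mul_of_nonneg_left ?_ (by positivity)
    exact div_le_div_of_nonneg_left (by positivity) (by linarith) (by
      have := pow_le_pow_of_le_one hq0.le hq1.le (show 1 ≤ 4*n+b by omega)
      rw [pow_one] at this
      rw [show (q^4)^n * q^b = q^(4*n+b) by rw [← pow_mul, ← pow_add]]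
      linarith)

lemma tele_sum (q : ℝ) (hq0 : 0 < q) (hq1 : q < 1) :
    ∑' n : ℕ, (q ^ (4 * n + 1) / (1 - q ^ (4 * n + 1)) -
        q ^ (4 * n + 5) / (1 - q ^ (4 * n + 5))) = q / (1 - q) := by
  set F : ℕ → ℝ := fun n => q ^ (4 * n + 1) / (1 - q ^ (4 * n + 1)) with hF
  have hsm : Summable (fun n : ℕ => F n - F (n + 1)) := by
    have h1 := L_summable q hq0 hq1 1 le_rfl
    have h5 := L_summable q hq0 hq1 5 (by norm_num)
    have : (fun n : ℕ => F (n + 1)) = fun n => q ^ (4 * n + 5) / (1 - q ^ (4 * n + 5)) := by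
      funext n; simp only [hF]; ring_nf
    exact h1.sub (this ▸ h5)
  have key : HasSum (fun n : ℕ => F n - F (n + 1)) (q / (1 - q)) := by
    rw [hsm.hasSum_iff_tendsto_nat]
    have hps : ∀ N : ℕ, ∑ i ∈ Finset.range N, (F i - F (i + 1)) = F 0 - F N := by
      intro N; exact Finset.sum_range_sub' F N
    simp only [hps]
    have hF0 : F 0 = q / (1 - q) := by simp [hF]
    have hlim : Tendsto F atTop (nhds 0) := by
      have hnum : Tendsto (fun n : ℕ => q ^ (4 * n + 1)) atTop (nhds 0) := by
        have : (fun n : ℕ => q ^ (4 * n + 1)) = fun n => (q ^ 4) ^ n * q := by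
          funext n; rw [← pow_mul, ← pow_succ]
        rw [this]
        simpa using (tendsto_pow_atTop_nhds_zero_of_lt_one (by positivity)
          (by calc q ^ 4 ≤ q ^ 1 := pow_le_pow_of_le_one hq0.le hq1.le (by norm_num)
              _ < 1 := by rwa [pow_one])).mul_const q
      have : Tendsto (fun n : ℕ => q ^ (4*n+1) / (1 - q ^ (4*n+1))) atTop (nhds (0 / (1 - 0))) :=
        hnum.div (tendsto_const_nhds.sub hnum) (by norm_num)
      simpa using this
    have h2 : Tendsto (fun N => F 0 - F N) atTop (nhds (F 0 - 0)) :=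
      Tendsto.sub tendsto_const_nhds hlim
    simpa [hF0] using h2
  have heq : (fun n : ℕ => F n - F (n + 1)) = fun n : ℕ =>
      q ^ (4 * n + 1) / (1 - q ^ (4 * n + 1)) - q ^ (4 * n + 5) / (1 - q ^ (4 * n + 5)) := by
    funext n; simp only [hF]; ring_nf
  rw [← heq, key.tsum_eq]

lemma termwise (x : ℝ) (hx : 0 < x) (n : ℕ) :
    Real.sinh x / (Real.cosh (4 * (↑n + 1) * x) - Real.cosh x) =
      Real.exp (-x) ^ (4 * n + 3) / (1 - Real.exp (-x) ^ (4 * n + 3)) -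
      Real.exp (-x) ^ (4 * n + 5) / (1 - Real.exp (-x) ^ (4 * n + 5)) := by
  set y := Real.exp (-x) with hy
  have hy0 : 0 < y := Real.exp_pos _
  have hy1 : y < 1 := by
    rw [hy, Real.exp_lt_one_iff]; linarith
  have hyne : y ≠ 0 := ne_of_gt hy0
  have h3 : 1 - y ^ (4 * n + 3) ≠ 0 := ne_of_gt (L_pos_den y hy0 hy1 _ (by omega))
  have h5 : 1 - y ^ (4 * n + 5) ≠ 0 := ne_of_gt (L_pos_den y hy0 hy1 _ (by omega))
  have e1 : Real.exp (4 * ((n : ℝ) + 1) * x) = y⁻¹ ^ (4 * n + 4) := by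
    rw [show (4 * ((n : ℝ) + 1) * x) = ((4 * n + 4 : ℕ) : ℝ) * x by push_cast; ring,
      Real.exp_nat_mul, hy, Real.exp_neg, inv_inv]
  have e2 : Real.exp (-(4 * ((n : ℝ) + 1) * x)) = y ^ (4 * n + 4) := by
    rw [show (-(4 * ((n : ℝ) + 1) * x)) = ((4 * n + 4 : ℕ) : ℝ) * (-x) by push_cast; ring,
      Real.exp_nat_mul]
  have e3 : Real.exp x = y⁻¹ := by rw [hy, Real.exp_neg, inv_inv]
  have hS : Real.sinh x = (1 - y ^ 2) / (2 * y) := by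
    rw [Real.sinh_eq, e3, ← hy]
    field_simp
  have hD : Real.cosh (4 * ((n : ℝ) + 1) * x) - Real.cosh x =
      (1 - y ^ (4 * n + 3)) * (1 - y ^ (4 * n + 5)) / (2 * y ^ (4 * n + 4)) := by
    rw [Real.cosh_eq, Real.cosh_eq, e1, e2, e3, ← hy]
    rw [eq_div_iff (by positivity : (2 : ℝ) * y ^ (4 * n + 4) ≠ 0)]
    rw [inv_pow]
    field_simp
    ring
  rw [hS, hD, div_div_div_eq]
  rw [div_sub_div _ _ h3 h5, div_eq_div_iff (by positivity) (mul_ne_zero h3 h5)]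
  ring

lemma coth_half (x : ℝ) (hx : 0 < x) :
    2 * (Real.cosh (x / 2) / Real.sinh (x / 2)) - 1 =
      1 + 4 * (Real.exp (-x) / (1 - Real.exp (-x))) := by
  set s := Real.exp (-(x / 2)) with hs
  have hs0 : 0 < s := Real.exp_pos _
  have hs1 : s < 1 := by rw [hs, Real.exp_lt_one_iff]; linarith
  have hsne : s ≠ 0 := ne_of_gt hs0
  have e1 : Real.exp (x / 2) = s⁻¹ := by rw [hs, Real.exp_neg, inv_inv]
  have e2 : Real.exp (-x) = s ^ 2 := by
    rw [show (-x) = ((2 : ℕ) : ℝ) * (-(x / 2)) by push_cast; ring, Real.exp_nat_mul]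
  have hq1 : 1 - s ^ 2 ≠ 0 := by nlinarith
  have hgt : s < s⁻¹ := lt_trans hs1 ((one_lt_inv₀ hs0).2 hs1)
  have hfrac : Real.cosh (x / 2) / Real.sinh (x / 2) = (1 + s ^ 2) / (1 - s ^ 2) := by
    rw [Real.cosh_eq, Real.sinh_eq, e1, ← hs]
    rw [div_eq_div_iff (ne_of_gt (by linarith : (0:ℝ) < (s⁻¹ - s) / 2)) hq1]
    field_simp
  rw [hfrac, e2]
  field_simp
  ring

theorem beta_lambert_form (x : ℝ) (hx : 0 < x) :
    x * (2 * (Real.cosh (x / 2) / Real.sinh (x / 2)) - 1 -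
        4 * ∑' n : ℕ, Real.sinh x / (Real.cosh (4 * (n + 1) * x) - Real.cosh x)) =
      x * (1 + 4 * ∑' n : ℕ,
        (Real.exp (-x) ^ (4 * (n + 1) - 3) / (1 - Real.exp (-x) ^ (4 * (n + 1) - 3)) -
          Real.exp (-x) ^ (4 * (n + 1) - 1) / (1 - Real.exp (-x) ^ (4 * (n + 1) - 1)))) := by
  set q := Real.exp (-x) with hq
  have hq0 : 0 < q := Real.exp_pos _
  have hq1 : q < 1 := by rw [hq, Real.exp_lt_one_iff]; linarith
  congr 1
  have hL : (∑' n : ℕ, Real.sinh x / (Real.cosh (4 * ((n : ℝ) + 1) * x) - Real.cosh x)) =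
      ∑' n : ℕ, (q ^ (4 * n + 3) / (1 - q ^ (4 * n + 3)) -
        q ^ (4 * n + 5) / (1 - q ^ (4 * n + 5))) :=
    tsum_congr fun n => termwise x hx n
  have hR : (∑' n : ℕ,
      (q ^ (4 * (n + 1) - 3) / (1 - q ^ (4 * (n + 1) - 3)) -
        q ^ (4 * (n + 1) - 1) / (1 - q ^ (4 * (n + 1) - 1)))) =
      ∑' n : ℕ, (q ^ (4 * n + 1) / (1 - q ^ (4 * n + 1)) -
        q ^ (4 * n + 3) / (1 - q ^ (4 * n + 3))) := by
    refine tsum_congr fun n => ?_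
    rw [show 4 * (n + 1) - 3 = 4 * n + 1 by omega, show 4 * (n + 1) - 1 = 4 * n + 3 by omega]
  rw [hL, hR]
  have S1 := L_summable q hq0 hq1 1 (by norm_num)
  have S3 := L_summable q hq0 hq1 3 (by norm_num)
  have S5 := L_summable q hq0 hq1 5 (by norm_num)
  have hadd : (∑' n : ℕ, (q ^ (4 * n + 1) / (1 - q ^ (4 * n + 1)) -
        q ^ (4 * n + 3) / (1 - q ^ (4 * n + 3)))) +
      (∑' n : ℕ, (q ^ (4 * n + 3) / (1 - q ^ (4 * n + 3)) -
        q ^ (4 * n + 5) / (1 - q ^ (4 * n + 5)))) = q / (1 - q) := by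
    rw [← Summable.tsum_add (S1.sub S3) (S3.sub S5), ← tele_sum q hq0 hq1]
    exact tsum_congr fun n => by ring
  have hc := coth_half x hx
  rw [← hq] at hc
  linarith
end

section
/- For every real x > 0, lim_{x→0⁺} of the quantity β(x) defined by π·β(x) = 2x·coth(x/2) - x - 4x·sinh(x)·∑_{n=1}^∞ 1/(cosh(4nx) - cosh(x)) equals 1; equivalently 4 - 8·∑_{n=1}^∞ 1/(16n² - 1) = π. -/
open Real Filter Finset Set

-- product-to-difference identity
lemma cosh_sub_cosh' (a b : ℝ) :
    Real.cosh a - Real.cosh b = 2 * Real.sinh ((a+b)/2) * Real.sinh ((a-b)/2) := by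
  have h1 : a = (a+b)/2 + (a-b)/2 := by ring
  have h2 : b = (a+b)/2 - (a-b)/2 := by ring
  calc Real.cosh a - Real.cosh b
      = Real.cosh ((a+b)/2 + (a-b)/2) - Real.cosh ((a+b)/2 - (a-b)/2) := by rw [← h1, ← h2]
    _ = 2 * Real.sinh ((a+b)/2) * Real.sinh ((a-b)/2) := by
        rw [Real.cosh_add, Real.cosh_sub]; ring

-- sinh y / y → 1 as y → 0+
lemma sinh_div_self_tendsto : Tendsto (fun y : ℝ => Real.sinh y / y) (nhdsWithin 0 (Set.Ioi 0)) (nhds 1) := by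
  have h := (hasDerivAt_iff_tendsto_slope).1 (Real.hasDerivAt_sinh 0)
  rw [Real.cosh_zero] at h
  have h2 : Tendsto (slope Real.sinh 0) (nhdsWithin 0 (Set.Ioi 0)) (nhds 1) :=
    h.mono_left (nhdsWithin_mono 0 (fun x hx => ne_of_gt hx))
  refine h2.congr fun x => ?_
  simp [slope_def_field]

lemma sinh_le_aux {x : ℝ} (h0 : 0 ≤ x) (h1 : x ≤ 1) : Real.sinh x ≤ x * Real.exp 2 := by
  have e1 : 1 + (-(2*x)) ≤ Real.exp (-(2*x)) := by
    have := Real.add_one_le_exp (-(2*x)); linarith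
  have e2 : Real.exp (2*x) ≤ Real.exp 2 := Real.exp_le_exp.2 (by linarith)
  have e3 : Real.exp (-(2*x)) * Real.exp (2*x) = 1 := by
    rw [← Real.exp_add]; norm_num
  have e4 : (1:ℝ) ≤ Real.exp (2*x) := Real.one_le_exp (by linarith)
  have e5 : Real.exp (-x) ≤ 1 := Real.exp_le_one_iff.2 (by linarith)
  have e6 : Real.exp (-x) * Real.exp x = 1 := by rw [← Real.exp_add]; norm_num
  have e7 : 0 < Real.exp (2*x) := Real.exp_pos _
  have e8 : 0 < Real.exp (-x) := Real.exp_pos _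
  rw [Real.sinh_eq]
  -- exp x - exp(-x) = exp(-x)*(exp(2x)-1) ≤ exp(2x)-1 ≤ 2x exp(2x) ≤ 2x exp 2
  have key : Real.exp x - Real.exp (-x) = Real.exp (-x) * (Real.exp (2*x) - 1) := by
    have : Real.exp x = Real.exp (-x) * Real.exp (2*x) := by
      rw [← Real.exp_add]; ring_nf
    rw [this]; ring
  nlinarith [mul_nonneg h0 (sub_nonneg.2 e2), mul_le_of_le_one_left (sub_nonneg.2 e4 : (0:ℝ) ≤ Real.exp (2*x) - 1) e5,
    mul_le_mul_of_nonneg_left e1 e7.le]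

lemma partial_sum_eq (m : ℕ) :
    ∑ j ∈ Finset.range m, ((1:ℝ)/(4*j+3) - 1/(4*j+5)) =
      1 - ∑ i ∈ Finset.range (2*m+1), (-1:ℝ)^i / (2*i+1) := by
  induction m with
  | zero => simp
  | succ m ih =>
    have h2 : 2*(m+1)+1 = (2*m+1) + 1 + 1 := by ring
    rw [Finset.sum_range_succ, h2, Finset.sum_range_succ, Finset.sum_range_succ, ih]
    have ho : (-1:ℝ)^(2*m+1) = -1 := Odd.neg_one_pow ⟨m, by ring⟩
    have he : (-1:ℝ)^(2*m+1+1) = 1 := Even.neg_one_pow ⟨m+1, by ring⟩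
    rw [ho, he]
    push_cast
    ring

lemma hasSum_g : HasSum (fun j : ℕ => (1:ℝ)/(4*j+3) - 1/(4*j+5)) (1 - Real.pi/4) := by
  have hnn : ∀ j : ℕ, (0:ℝ) ≤ 1/(4*j+3) - 1/(4*j+5) := by
    intro j
    have h3 : (0:ℝ) < 4*j+3 := by positivity
    have h5 : (0:ℝ) < 4*j+5 := by positivity
    rw [sub_nonneg]
    apply one_div_le_one_div_of_le h3; linarith
  rw [hasSum_iff_tendsto_nat_of_nonneg hnn]
  have hmono : StrictMono (fun m : ℕ => 2*m+1) := by intro a b h; dsimp; omega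
  have hsub : Tendsto (fun m : ℕ => ∑ i ∈ Finset.range (2*m+1), (-1:ℝ)^i / (2*i+1))
      atTop (nhds (Real.pi/4)) := Real.tendsto_sum_pi_div_four.comp hmono.tendsto_atTop
  have := (tendsto_const_nhds (x := (1:ℝ)) (f := atTop)).sub hsub
  refine this.congr fun m => ?_
  exact (partial_sum_eq m).symm

lemma hasSum_S : HasSum (fun n : ℕ => 1 / (16 * ((n : ℝ) + 1) ^ 2 - 1)) ((1 - Real.pi/4)/2) := by
  have h := hasSum_g.div_const 2
  have heq : ∀ n : ℕ, 1 / (16 * ((n : ℝ) + 1) ^ 2 - 1) = ((1:ℝ)/(4*n+3) - 1/(4*n+5))/2 := by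
    intro n
    have h3 : (4*(n:ℝ)+3) ≠ 0 := by positivity
    have h5 : (4*(n:ℝ)+5) ≠ 0 := by positivity
    have h16 : (16 * ((n : ℝ) + 1) ^ 2 - 1) ≠ 0 := by nlinarith [sq_nonneg ((n:ℝ)+1), Nat.cast_nonneg (α:=ℝ) n]
    field_simp
    ring
  simp only [heq]
  exact h

lemma mul_tendsto_pos {c : ℝ} (hc : 0 < c) :
    Tendsto (fun x : ℝ => c * x) (nhdsWithin 0 (Set.Ioi 0)) (nhdsWithin 0 (Set.Ioi 0)) := by
  apply tendsto_nhdsWithin_of_tendsto_nhds_of_eventually_within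
  · have : Tendsto (fun x : ℝ => c * x) (nhds 0) (nhds (c * 0)) :=
      (continuous_const.mul continuous_id).tendsto 0
    simpa using this.mono_left nhdsWithin_le_nhds
  · filter_upwards [self_mem_nhdsWithin] with x hx
    exact mul_pos hc hx

lemma tendsto_sinh_div {c : ℝ} (hc : 0 < c) :
    Tendsto (fun x : ℝ => Real.sinh (c*x) / (c*x)) (nhdsWithin 0 (Set.Ioi 0)) (nhds 1) :=
  sinh_div_self_tendsto.comp (mul_tendsto_pos hc)

lemma ptwise (n : ℕ) :
    Tendsto (fun x : ℝ => 4*x*Real.sinh x * (1/(Real.cosh (4*((n:ℝ)+1)*x) - Real.cosh x)))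
      (nhdsWithin 0 (Set.Ioi 0)) (nhds (8/(16*((n:ℝ)+1)^2-1))) := by
  have ha : (0:ℝ) < (4*n+5)/2 := by positivity
  have hb : (0:ℝ) < (4*n+3)/2 := by positivity
  have hD : ∀ x : ℝ, Real.cosh (4*((n:ℝ)+1)*x) - Real.cosh x =
      2*Real.sinh ((4*n+5)/2*x)*Real.sinh ((4*n+3)/2*x) := by
    intro x
    rw [cosh_sub_cosh']
    have e1 : (4*((n:ℝ)+1)*x + x)/2 = (4*n+5)/2*x := by ring
    have e2 : (4*((n:ℝ)+1)*x - x)/2 = (4*n+3)/2*x := by ring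
    rw [e1, e2]
  have hF : Tendsto (fun x : ℝ => (4 * (Real.sinh x / x)) /
      (2*((4*n+5)/2)*((4*n+3)/2)*(Real.sinh ((4*n+5)/2*x)/((4*n+5)/2*x))*(Real.sinh ((4*n+3)/2*x)/((4*n+3)/2*x))))
      (nhdsWithin 0 (Set.Ioi 0))
      (nhds ((4*1)/(2*((4*(n:ℝ)+5)/2)*((4*n+3)/2)*1*1))) := by
    apply Tendsto.div
    · exact (sinh_div_self_tendsto).const_mul 4
    · exact ((tendsto_const_nhds.mul (tendsto_sinh_div ha)).mul (tendsto_sinh_div hb))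
    · have : (0:ℝ) < 2*((4*(n:ℝ)+5)/2)*((4*n+3)/2)*1*1 := by positivity
      exact ne_of_gt this
  have hval : (4*1)/(2*((4*(n:ℝ)+5)/2)*((4*n+3)/2)*1*1) = 8/(16*((n:ℝ)+1)^2-1) := by
    have h1 : ((4:ℝ)*n+5) ≠ 0 := by positivity
    have h2 : ((4:ℝ)*n+3) ≠ 0 := by positivity
    have h3 : (16 * ((n : ℝ) + 1) ^ 2 - 1) ≠ 0 := by
      nlinarith [sq_nonneg ((n:ℝ)+1), Nat.cast_nonneg (α:=ℝ) n]
    field_simp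
    ring
  rw [hval] at hF
  refine hF.congr' ?_
  filter_upwards [self_mem_nhdsWithin] with x hx
  have hx0 : x ≠ 0 := ne_of_gt hx
  have hsa : Real.sinh ((4*n+5)/2*x) ≠ 0 := ne_of_gt (Real.sinh_pos_iff.2 (mul_pos ha hx))
  have hsb : Real.sinh ((4*n+3)/2*x) ≠ 0 := ne_of_gt (Real.sinh_pos_iff.2 (mul_pos hb hx))
  rw [hD x]
  field_simp

lemma bound_aux (n : ℕ) {x : ℝ} (hx0 : 0 < x) (hx1 : x < 1) :
    ‖4*x*Real.sinh x * (1/(Real.cosh (4*((n:ℝ)+1)*x) - Real.cosh x))‖ ≤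
      8*Real.exp 2/((4*n+3)*(4*n+5)) := by
  have ha : (0:ℝ) < (4*n+5)/2 := by positivity
  have hb : (0:ℝ) < (4*n+3)/2 := by positivity
  have hD : Real.cosh (4*((n:ℝ)+1)*x) - Real.cosh x =
      2*Real.sinh ((4*n+5)/2*x)*Real.sinh ((4*n+3)/2*x) := by
    rw [cosh_sub_cosh']
    have e1 : (4*((n:ℝ)+1)*x + x)/2 = (4*n+5)/2*x := by ring
    have e2 : (4*((n:ℝ)+1)*x - x)/2 = (4*n+3)/2*x := by ring
    rw [e1, e2]
  have hsa : (4*(n:ℝ)+5)/2*x ≤ Real.sinh ((4*n+5)/2*x) := Real.self_le_sinh_iff.2 (le_of_lt (mul_pos ha hx0))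
  have hsb : (4*(n:ℝ)+3)/2*x ≤ Real.sinh ((4*n+3)/2*x) := Real.self_le_sinh_iff.2 (le_of_lt (mul_pos hb hx0))
  have hsa0 : 0 < Real.sinh ((4*(n:ℝ)+5)/2*x) := Real.sinh_pos_iff.2 (mul_pos ha hx0)
  have hsb0 : 0 < Real.sinh ((4*(n:ℝ)+3)/2*x) := Real.sinh_pos_iff.2 (mul_pos hb hx0)
  have hDpos : 0 < 2*Real.sinh ((4*(n:ℝ)+5)/2*x)*Real.sinh ((4*n+3)/2*x) := by positivity
  have hnum : 4*x*Real.sinh x ≤ 4*Real.exp 2*x^2 := by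
    have := sinh_le_aux hx0.le hx1.le
    nlinarith
  have hden : 2*((4*(n:ℝ)+5)/2*x)*((4*n+3)/2*x) ≤ 2*Real.sinh ((4*(n:ℝ)+5)/2*x)*Real.sinh ((4*n+3)/2*x) := by
    have h1 : 0 ≤ (4*(n:ℝ)+5)/2*x := le_of_lt (mul_pos ha hx0)
    have h2 : 0 ≤ (4*(n:ℝ)+3)/2*x := le_of_lt (mul_pos hb hx0)
    nlinarith
  have hdpos : (0:ℝ) < 2*((4*(n:ℝ)+5)/2*x)*((4*n+3)/2*x) := by positivity
  have hf : 4*x*Real.sinh x * (1/(Real.cosh (4*((n:ℝ)+1)*x) - Real.cosh x)) =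
      (4*x*Real.sinh x) / (2*Real.sinh ((4*n+5)/2*x)*Real.sinh ((4*n+3)/2*x)) := by
    rw [hD]; ring
  rw [hf, Real.norm_eq_abs, abs_of_nonneg (by positivity)]
  calc (4*x*Real.sinh x) / (2*Real.sinh ((4*(n:ℝ)+5)/2*x)*Real.sinh ((4*n+3)/2*x))
      ≤ (4*Real.exp 2*x^2) / (2*((4*(n:ℝ)+5)/2*x)*((4*n+3)/2*x)) :=
        div_le_div₀ (by positivity) hnum hdpos hden
    _ = 8*Real.exp 2/((4*n+3)*(4*n+5)) := by
        have hx0' : x ≠ 0 := ne_of_gt hx0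
        have h1 : ((4:ℝ)*n+5) ≠ 0 := by positivity
        have h2 : ((4:ℝ)*n+3) ≠ 0 := by positivity
        field_simp
        ring

lemma bound_summable : Summable (fun n : ℕ => 8*Real.exp 2/((4*(n:ℝ)+3)*(4*n+5))) := by
  have h0 : Summable (fun n : ℕ => 1/((n:ℝ))^2) := Real.summable_one_div_nat_pow.2 one_lt_two
  have h1 : Summable (fun n : ℕ => 1/(((n:ℝ))+1)^2) := by
    have := (summable_nat_add_iff 1).2 h0
    refine this.congr fun n => ?_
    push_cast
    ring
  have h2 := h1.mul_left (8*Real.exp 2)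
  refine Summable.of_nonneg_of_le (fun n => by positivity) (fun n => ?_) h2
  have hp : (0:ℝ) < ((n:ℝ)+1)^2 := by positivity
  have hq : (0:ℝ) < (4*(n:ℝ)+3)*(4*n+5) := by positivity
  have hle : ((n:ℝ)+1)^2 ≤ (4*(n:ℝ)+3)*(4*n+5) := by nlinarith [Nat.cast_nonneg (α:=ℝ) n]
  rw [mul_one_div]
  exact div_le_div_of_nonneg_left (by positivity) hp hle

theorem beta_tendsto_one :
    Filter.Tendsto (fun x : ℝ =>
      (2 * x * (Real.cosh (x / 2) / Real.sinh (x / 2)) - x -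
        4 * x * Real.sinh x *
          ∑' n : ℕ, 1 / (Real.cosh (4 * (n + 1) * x) - Real.cosh x)) / Real.pi)
      (nhdsWithin 0 (Set.Ioi 0)) (nhds 1) ∧
    4 - 8 * ∑' n : ℕ, 1 / (16 * ((n : ℝ) + 1) ^ 2 - 1) = Real.pi := by
  have hS8 : HasSum (fun n : ℕ => 8/(16*((n:ℝ)+1)^2-1)) (4 - Real.pi) := by
    have h := hasSum_S.mul_left 8
    have hv : 8 * ((1 - Real.pi/4)/2) = 4 - Real.pi := by ring
    rw [hv] at h
    have heq : (fun n : ℕ => 8 * (1/(16*((n:ℝ)+1)^2-1))) = fun n : ℕ => 8/(16*((n:ℝ)+1)^2-1) := by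
      funext n; rw [mul_one_div]
    rwa [heq] at h
  constructor
  · -- the limit
    have h3 : Tendsto (fun x : ℝ =>
        ∑' n : ℕ, 4*x*Real.sinh x * (1/(Real.cosh (4*((n:ℝ)+1)*x) - Real.cosh x)))
        (nhdsWithin 0 (Set.Ioi 0)) (nhds (∑' n : ℕ, 8/(16*((n:ℝ)+1)^2-1))) := by
      apply tendsto_tsum_of_dominated_convergence bound_summable ptwise
      filter_upwards [Ioo_mem_nhdsGT (by norm_num : (0:ℝ) < 1)] with x hx n
      exact bound_aux n hx.1 hx.2
    rw [hS8.tsum_eq] at h3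
    have h3' : Tendsto (fun x : ℝ =>
        4*x*Real.sinh x * ∑' n : ℕ, 1/(Real.cosh (4*((n:ℝ)+1)*x) - Real.cosh x))
        (nhdsWithin 0 (Set.Ioi 0)) (nhds (4 - Real.pi)) := by
      refine h3.congr fun x => ?_
      exact tsum_mul_left
    have h1 : Tendsto (fun x : ℝ => 2 * x * (Real.cosh (x / 2) / Real.sinh (x / 2)))
        (nhdsWithin 0 (Set.Ioi 0)) (nhds 4) := by
      have hc : Tendsto (fun x : ℝ => 4 * Real.cosh (x/2)) (nhdsWithin 0 (Set.Ioi 0)) (nhds 4) := by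
        have : Tendsto (fun x : ℝ => 4 * Real.cosh (x/2)) (nhds 0) (nhds (4 * Real.cosh (0/2))) :=
          (continuous_const.mul (Real.continuous_cosh.comp (continuous_id.div_const 2))).tendsto 0
        simpa using this.mono_left nhdsWithin_le_nhds
      have hs : Tendsto (fun x : ℝ => Real.sinh (x/2)/(x/2)) (nhdsWithin 0 (Set.Ioi 0)) (nhds 1) := by
        have := tendsto_sinh_div (c := 1/2) (by norm_num)
        refine this.congr fun x => ?_
        norm_num [div_eq_mul_inv, mul_comm]
      have hF := hc.div hs one_ne_zero
      norm_num at hF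
      refine hF.congr' ?_
      filter_upwards [self_mem_nhdsWithin] with x hx
      have hx0 : x ≠ 0 := ne_of_gt hx
      have hsh : Real.sinh (x/2) ≠ 0 := ne_of_gt (Real.sinh_pos_iff.2 (half_pos hx))
      simp only [Pi.div_apply]
      field_simp
      ring
    have h2 : Tendsto (fun x : ℝ => x) (nhdsWithin 0 (Set.Ioi 0)) (nhds 0) :=
      (continuous_id.tendsto 0).mono_left nhdsWithin_le_nhds
    have hall := ((h1.sub h2).sub h3').div_const Real.pi
    have hv : (4 - 0 - (4 - Real.pi))/Real.pi = 1 := by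
      field_simp
      ring
    rw [hv] at hall
    exact hall
  · rw [hasSum_S.tsum_eq]; ring
end

section
/- For every real x > 0, x·[1 + 4·∑_{n=1}^∞ (q^{4n-3}/(1-q^{4n-3}) - q^{4n-1}/(1-q^{4n-1}))] = π·(∑_{n=-∞}^∞ e^{-(π²/x) n²})², where q = e^{-x}. -/
open Zsqrtd GaussianInt Finset

abbrev GI := GaussianInt

namespace TwoSq

def natNorm (z : GI) : ℕ := z.norm.natAbs

lemma intCast_natNorm (z : GI) : (natNorm z : ℤ) = z.norm :=
  Int.natAbs_of_nonneg (GaussianInt.norm_nonneg z)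

lemma natNorm_eq (z : GI) : (natNorm z : ℤ) = z.re ^ 2 + z.im ^ 2 := by
  rw [intCast_natNorm, Zsqrtd.norm_def]; ring

lemma natNorm_mul (z w : GI) : natNorm (z * w) = natNorm z * natNorm w := by
  simp [natNorm, Zsqrtd.norm_mul, Int.natAbs_mul]

lemma natNorm_eq_zero {z : GI} : natNorm z = 0 ↔ z = 0 := by
  rw [natNorm, Int.natAbs_eq_zero, GaussianInt.norm_eq_zero]

lemma natNorm_one : natNorm 1 = 1 := by simp [natNorm]

lemma natNorm_eq_one_iff {z : GI} : natNorm z = 1 ↔ IsUnit z := Zsqrtd.norm_eq_one_iff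

lemma natNorm_conj (z : GI) : natNorm (star z) = natNorm z := by
  have : (star z).norm = z.norm := by
    rw [Zsqrtd.norm_def, Zsqrtd.norm_def, Zsqrtd.re_star, Zsqrtd.im_star]; ring
  simp [natNorm, this]

lemma natNorm_dvd {z w : GI} (h : z ∣ w) : natNorm z ∣ natNorm w := by
  obtain ⟨c, rfl⟩ := h; exact ⟨natNorm c, natNorm_mul _ _⟩

def ii : GI := ⟨0, 1⟩

lemma ii_re : ii.re = 0 := rfl
lemma ii_im : ii.im = 1 := rfl

lemma mul_re' (z w : GI) : (z * w).re = z.re * w.re - z.im * w.im := by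
  rw [Zsqrtd.re_mul]; ring

lemma mul_im' (z w : GI) : (z * w).im = z.re * w.im + z.im * w.re := by
  rw [Zsqrtd.im_mul]

lemma isUnit_ii : IsUnit ii := IsUnit.of_mul_eq_one (a := ii) ⟨0, -1⟩ (by decide)

lemma assoc_mul_unit (z u : GI) (hu : IsUnit u) : Associated z (z * u) :=
  ⟨hu.unit, by rw [IsUnit.unit_spec]⟩

lemma units_eq {u : GI} (h : IsUnit u) : u = 1 ∨ u = -1 ∨ u = ii ∨ u = -ii := by
  have h1 : natNorm u = 1 := natNorm_eq_one_iff.2 h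
  have h2 : u.re ^ 2 + u.im ^ 2 = 1 := by
    have := natNorm_eq u; rw [h1] at this; exact_mod_cast this.symm
  have hre : u.re = 0 ∨ u.re = 1 ∨ u.re = -1 := by
    have : -1 ≤ u.re ∧ u.re ≤ 1 := by
      constructor <;> nlinarith [sq_nonneg u.im, sq_nonneg (u.re - 1), sq_nonneg (u.re + 1)]
    omega
  have him : u.im = 0 ∨ u.im = 1 ∨ u.im = -1 := by
    have : -1 ≤ u.im ∧ u.im ≤ 1 := by
      constructor <;> nlinarith [sq_nonneg u.re, sq_nonneg (u.im - 1), sq_nonneg (u.im + 1)]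
    omega
  rcases hre with h3 | h3 | h3 <;> rcases him with h4 | h4 | h4 <;>
    first
    | (simp only [Zsqrtd.ext_iff, Zsqrtd.re_one, Zsqrtd.im_one, Zsqrtd.re_neg, Zsqrtd.im_neg,
        ii_re, ii_im]; omega)
    | (exfalso; rw [h3, h4] at h2; norm_num at h2)

def Pos (z : GI) : Prop := 0 < z.re ∧ 0 ≤ z.im

lemma Pos.ne_zero {z : GI} (h : Pos z) : z ≠ 0 := by
  intro h0; rw [h0] at h; exact absurd h.1 (by simp)

lemma pos_unique {z w : GI} (h : Associated z w) (hz : Pos z) (hw : Pos w) : z = w := by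
  obtain ⟨u, hu⟩ := h
  rcases units_eq u.isUnit with h1 | h1 | h1 | h1 <;> rw [h1] at hu
  · rw [mul_one] at hu; exact hu
  · exfalso
    have : w.re = -z.re := by rw [← hu]; simp
    have := hz.1; have := hw.1; omega
  · exfalso
    have : w.re = -z.im := by rw [← hu, mul_re', ii_re, ii_im]; ring
    have := hz.2; have := hw.1; omega
  · exfalso
    have : w.im = -z.re := by rw [← hu]; rw [mul_neg, Zsqrtd.im_neg, mul_im', ii_re, ii_im]; ring
    have := hz.1; have := hw.2; omega

lemma exists_pos {z : GI} (hz : z ≠ 0) : ∃ w, Associated z w ∧ Pos w := by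
  have hne : ¬(z.re = 0 ∧ z.im = 0) := by
    intro ⟨h1, h2⟩
    exact hz (by rw [Zsqrtd.ext_iff]; simp [h1, h2])
  have hC : (0 < z.re ∧ 0 ≤ z.im) ∨ (z.im < 0 ∧ 0 ≤ z.re) ∨ (z.re < 0 ∧ z.im ≤ 0) ∨
      (0 < z.im ∧ z.re ≤ 0) := by omega
  rcases hC with h | h | h | h
  · exact ⟨z, Associated.refl z, h⟩
  · refine ⟨z * ii, assoc_mul_unit _ _ isUnit_ii, ?_, ?_⟩
    · rw [mul_re', ii_re, ii_im]; omega
    · rw [mul_im', ii_re, ii_im]; omega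
  · refine ⟨z * (-1), assoc_mul_unit _ _ (IsUnit.neg isUnit_one), ?_, ?_⟩
    · rw [mul_neg, mul_one, Zsqrtd.re_neg]; omega
    · rw [mul_neg, mul_one, Zsqrtd.im_neg]; omega
  · refine ⟨z * (-ii), assoc_mul_unit _ _ isUnit_ii.neg, ?_, ?_⟩
    · rw [mul_neg, Zsqrtd.re_neg, mul_re', ii_re, ii_im]; omega
    · rw [mul_neg, Zsqrtd.im_neg, mul_im', ii_re, ii_im]; omega

open scoped Classical in
noncomputable def rep (z : GI) : GI :=
  if h : ∃ w, Associated z w ∧ Pos w then h.choose else 0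

lemma rep_spec {z : GI} (hz : z ≠ 0) : Associated z (rep z) ∧ Pos (rep z) := by
  classical
  rw [rep, dif_pos (exists_pos hz)]
  exact (exists_pos hz).choose_spec

lemma rep_eq {z w : GI} (h : Associated z w) (hw : Pos w) : rep z = w := by
  have hz : z ≠ 0 := by
    rintro rfl
    obtain ⟨u, hu⟩ := h
    exact hw.ne_zero (by rw [← hu, zero_mul])
  obtain ⟨h1, h2⟩ := rep_spec hz
  exact pos_unique (h1.symm.trans h) h2 hw

lemma rep_pos_eq {z : GI} (hz : Pos z) : rep z = z := rep_eq (Associated.refl z) hz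



noncomputable def box (N : ℕ) : Finset GI :=
  (Finset.Icc (-(N : ℤ)) N ×ˢ Finset.Icc (-(N : ℤ)) N).image fun p => ⟨p.1, p.2⟩

lemma mem_box_of {N : ℕ} {z : GI} (h : natNorm z = N) : z ∈ box N := by
  have h2 : z.re ^ 2 + z.im ^ 2 = (N : ℤ) := by rw [← natNorm_eq, h]
  have hre : -(N : ℤ) ≤ z.re ∧ z.re ≤ N := by
    constructor <;> nlinarith [sq_nonneg z.im, sq_nonneg (z.re - 1), sq_nonneg (z.re + 1)]
  have him : -(N : ℤ) ≤ z.im ∧ z.im ≤ N := by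
    constructor <;> nlinarith [sq_nonneg z.re, sq_nonneg (z.im - 1), sq_nonneg (z.im + 1)]
  refine Finset.mem_image.2 ⟨(z.re, z.im), ?_, by rfl⟩
  rw [Finset.mem_product, Finset.mem_Icc, Finset.mem_Icc]
  exact ⟨⟨hre.1, hre.2⟩, ⟨him.1, him.2⟩⟩

noncomputable def allSols (N : ℕ) : Finset GI := (box N).filter fun z => natNorm z = N

noncomputable def sols (N : ℕ) : Finset GI :=
  (box N).filter fun z => natNorm z = N ∧ 0 < z.re ∧ 0 ≤ z.im

lemma mem_allSols {N : ℕ} {z : GI} : z ∈ allSols N ↔ natNorm z = N := by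
  rw [allSols, Finset.mem_filter]
  exact ⟨fun h => h.2, fun h => ⟨mem_box_of h, h⟩⟩

lemma mem_sols {N : ℕ} {z : GI} : z ∈ sols N ↔ natNorm z = N ∧ Pos z := by
  rw [sols, Finset.mem_filter, Pos]
  exact ⟨fun h => ⟨h.2.1, h.2.2⟩, fun h => ⟨mem_box_of h.1, h.1, h.2⟩⟩

noncomputable def H (N : ℕ) : ℕ := (sols N).card

lemma sols_zero : sols 0 = ∅ := by
  ext z
  simp only [mem_sols, Finset.notMem_empty, iff_false]
  rintro ⟨h1, h2⟩
  exact h2.ne_zero (natNorm_eq_zero.1 h1)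

lemma H_zero : H 0 = 0 := by rw [H, sols_zero]; rfl

lemma sols_one : sols 1 = {1} := by
  ext z
  simp only [mem_sols, Finset.mem_singleton]
  constructor
  · rintro ⟨h1, h2⟩
    have ha : Associated z 1 := associated_one_iff_isUnit.2 (natNorm_eq_one_iff.1 h1)
    exact pos_unique ha h2 ⟨by simp, by simp⟩
  · rintro rfl
    exact ⟨natNorm_one, by constructor <;> simp [Zsqrtd.re_one, Zsqrtd.im_one]⟩

lemma H_one : H 1 = 1 := by rw [H, sols_one]; rfl

lemma rep_mem_sols {z : GI} (hz : z ≠ 0) : rep z ∈ sols (natNorm z) := by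
  obtain ⟨h1, h2⟩ := rep_spec hz
  rw [mem_sols]
  refine ⟨?_, h2⟩
  obtain ⟨u, hu⟩ := h1
  rw [← hu, natNorm_mul, natNorm_eq_one_iff.2 u.isUnit, mul_one]

lemma natNorm_natCast (n : ℕ) : natNorm (n : GI) = n * n := by
  have h := natNorm_eq (n : GI)
  rw [Zsqrtd.re_natCast, Zsqrtd.im_natCast] at h
  have h2 : (natNorm (n : GI) : ℤ) = ((n * n : ℕ) : ℤ) := by rw [h]; push_cast; ring
  exact_mod_cast h2

lemma self_mul_star (z : GI) : ((natNorm z : ℕ) : GI) = z * star z := by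
  have h1 : ((natNorm z : ℤ) : GI) = ((z.norm : ℤ) : GI) := by rw [intCast_natNorm]
  have := Zsqrtd.norm_eq_mul_conj z
  push_cast at h1 ⊢
  rw [h1, this]

set_option synthInstance.maxHeartbeats 1000000 in
lemma prime_of_natNorm_prime {z : GI} (hp : (natNorm z).Prime) : Prime z := by
  rw [← irreducible_iff_prime]
  constructor
  · rw [← natNorm_eq_one_iff]; exact fun h => hp.ne_one h
  · intro x y hxy
    have hn : (natNorm x * natNorm y).Prime := by
      rw [← natNorm_mul, ← hxy]; exact hp
    rcases Nat.prime_mul_iff.1 hn with ⟨_, h⟩ | ⟨_, h⟩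
    · exact Or.inr (natNorm_eq_one_iff.1 h)
    · exact Or.inl (natNorm_eq_one_iff.1 h)

lemma star_dvd {π z : GI} (h : π ∣ star z) : star π ∣ z := by
  obtain ⟨c, hc⟩ := h
  exact ⟨star c, by rw [← star_star z, hc, star_mul']⟩

lemma isCoprime_of_natNorm {u v : GI} (h : Nat.Coprime (natNorm u) (natNorm v)) :
    IsCoprime u v := by
  classical
  rw [← EuclideanDomain.gcd_isUnit_iff, ← natNorm_eq_one_iff]
  exact Nat.eq_one_of_dvd_one (h ▸ Nat.dvd_gcd
    (natNorm_dvd (EuclideanDomain.gcd_dvd_left u v))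
    (natNorm_dvd (EuclideanDomain.gcd_dvd_right u v)))

lemma exists_dvd_norm : ∀ a : ℕ, ∀ b : ℕ, Nat.Coprime a b → ∀ z : GI,
    natNorm z = a * b → ∃ u, u ∣ z ∧ natNorm u = a := by
  intro a
  induction a using Nat.strong_induction_on with
  | _ a IH =>
    intro b hab z hz
    rcases Nat.eq_zero_or_pos a with rfl | ha0
    · have hz0 : z = 0 := natNorm_eq_zero.1 (by rw [hz, zero_mul])
      exact ⟨0, by rw [hz0], natNorm_eq_zero.2 rfl⟩
    rcases eq_or_ne a 1 with rfl | ha1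
    · exact ⟨1, one_dvd z, natNorm_one⟩
    obtain ⟨p, hp, hpa⟩ : ∃ p, p.Prime ∧ p ∣ a :=
      ⟨a.minFac, Nat.minFac_prime ha1, Nat.minFac_dvd a⟩
    have hpcopb : Nat.Coprime p b := Nat.Coprime.coprime_dvd_left hpa hab
    have hdvdzz : ((a * b : ℕ) : GI) = z * star z := by rw [← hz, self_mul_star]
    by_cases h3 : p % 4 = 3
    · haveI : Fact p.Prime := ⟨hp⟩
      have hprime : Prime ((p : ℕ) : GI) := by
        have := GaussianInt.prime_of_nat_prime_of_mod_four_eq_three p h3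
        exact this
      have hdvd : ((p : ℕ) : GI) ∣ z * star z := by
        have h' : ((p : ℕ) : GI) ∣ ((a * b : ℕ) : GI) :=
          Nat.cast_dvd_cast (Dvd.dvd.mul_right hpa b)
        rwa [hdvdzz] at h'
      have hpz : ((p : ℕ) : GI) ∣ z := by
        rcases hprime.2.2 _ _ hdvd with h | h
        · exact h
        · have := star_dvd h; rwa [star_natCast] at this
      obtain ⟨w, rfl⟩ := hpz
      have hnw : p * p * natNorm w = a * b := by
        rw [← hz, natNorm_mul, natNorm_natCast]
      have hp2a : p * p ∣ a :=
        Nat.Coprime.dvd_of_dvd_mul_right (Nat.Coprime.mul hpcopb hpcopb)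
          ⟨natNorm w, hnw.symm⟩
      obtain ⟨a', rfl⟩ := hp2a
      have hnw' : natNorm w = a' * b := by
        have hpp : 0 < p * p := Nat.mul_pos hp.pos hp.pos
        have : p * p * natNorm w = p * p * (a' * b) := by rw [hnw]; ring
        exact Nat.eq_of_mul_eq_mul_left hpp this
      have ha'0 : 0 < a' := by
        rcases Nat.eq_zero_or_pos a' with rfl | h
        · simp at ha0
        · exact h
      have h4 : 2 * a' ≤ p * p * a' :=
        Nat.mul_le_mul_right a' (by nlinarith [hp.two_le])
      have ha' : a' < p * p * a' := by omega
      obtain ⟨u, hu1, hu2⟩ := IH a' ha' b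
        (Nat.Coprime.coprime_dvd_left (Dvd.intro_left _ rfl) hab) w hnw'
      exact ⟨(p : GI) * u, mul_dvd_mul_left _ hu1,
        by rw [natNorm_mul, natNorm_natCast, hu2]⟩
    · haveI : Fact p.Prime := ⟨hp⟩
      obtain ⟨s, t, hst⟩ := Nat.Prime.sq_add_sq h3
      set π : GI := ⟨(s : ℤ), (t : ℤ)⟩ with hπ_def
      have hπn : natNorm π = p := by
        have : (natNorm π : ℤ) = ((s : ℤ) ^ 2 + (t : ℤ) ^ 2) := natNorm_eq π
        have h2 : ((s : ℤ) ^ 2 + (t : ℤ) ^ 2) = (p : ℤ) := by exact_mod_cast hst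
        exact_mod_cast this.trans h2
      have hπp : Prime π := prime_of_natNorm_prime (hπn ▸ hp)
      have key : ∀ π' : GI, natNorm π' = p → π' ∣ z → ∃ u, u ∣ z ∧ natNorm u = a := by
        intro π' hπ'n hπ'z
        obtain ⟨w, rfl⟩ := hπ'z
        have hnw : p * natNorm w = a * b := by rw [← hz, natNorm_mul, hπ'n]
        obtain ⟨a', rfl⟩ := hpa
        have hnw' : natNorm w = a' * b := by
          have : p * natNorm w = p * (a' * b) := by rw [hnw]; ring
          exact Nat.eq_of_mul_eq_mul_left hp.pos this
        have ha'0 : 0 < a' := by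
          rcases Nat.eq_zero_or_pos a' with rfl | h
          · simp at ha0
          · exact h
        have h4 : 2 * a' ≤ p * a' := Nat.mul_le_mul_right a' hp.two_le
        have ha' : a' < p * a' := by omega
        obtain ⟨u, hu1, hu2⟩ := IH a' ha' b
          (Nat.Coprime.coprime_dvd_left (Dvd.intro_left _ rfl) hab) w hnw'
        exact ⟨π' * u, mul_dvd_mul_left _ hu1, by rw [natNorm_mul, hπ'n, hu2]⟩
      have hdvd : π ∣ z * star z := by
        have hππ : ((p : ℕ) : GI) = π * star π := by rw [← hπn]; exact self_mul_star π
        have h' : ((p : ℕ) : GI) ∣ ((a * b : ℕ) : GI) :=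
          Nat.cast_dvd_cast (Dvd.dvd.mul_right hpa b)
        rw [hdvdzz] at h'
        exact dvd_trans ⟨star π, hππ⟩ h'
      rcases hπp.2.2 _ _ hdvd with h | h
      · exact key π hπn h
      · exact key (star π) (natNorm_conj π ▸ hπn) (star_dvd h)

lemma H_mul {a b : ℕ} (hab : Nat.Coprime a b) : H (a * b) = H a * H b := by
  rcases Nat.eq_zero_or_pos a with rfl | ha0
  · rw [(Nat.coprime_zero_left b).1 hab]; norm_num [H_zero, H_one]
  rcases Nat.eq_zero_or_pos b with rfl | hb0
  · rw [(Nat.coprime_zero_right a).1 hab]; norm_num [H_zero, H_one]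
  rw [H, H, H, ← Finset.card_product]
  symm
  apply Finset.card_bij (fun p _ => rep (p.1 * p.2))
  · rintro ⟨u, v⟩ hp
    rw [Finset.mem_product, mem_sols, mem_sols] at hp
    obtain ⟨⟨hu1, hu2⟩, hv1, hv2⟩ := hp
    have hne : u * v ≠ 0 := mul_ne_zero hu2.ne_zero hv2.ne_zero
    have := rep_mem_sols hne
    rwa [natNorm_mul, hu1, hv1] at this
  · rintro ⟨u, v⟩ hp ⟨u', v'⟩ hp' heq
    rw [Finset.mem_product, mem_sols, mem_sols] at hp hp'
    obtain ⟨⟨hu1, hu2⟩, hv1, hv2⟩ := hp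
    obtain ⟨⟨hu1', hu2'⟩, hv1', hv2'⟩ := hp'
    have hne : u * v ≠ 0 := mul_ne_zero hu2.ne_zero hv2.ne_zero
    have hne' : u' * v' ≠ 0 := mul_ne_zero hu2'.ne_zero hv2'.ne_zero
    have hassoc : Associated (u * v) (u' * v') :=
      ((rep_spec hne).1.trans (heq ▸ (rep_spec hne').1.symm))
    have hcop : IsCoprime u v' := isCoprime_of_natNorm (by rw [hu1, hv1']; exact hab)
    have hcop' : IsCoprime u' v := isCoprime_of_natNorm (by rw [hu1', hv1]; exact hab)
    have hd1 : u ∣ u' := hcop.dvd_of_dvd_mul_right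
      (dvd_trans (dvd_mul_right u v) hassoc.dvd)
    have hd2 : u' ∣ u := hcop'.dvd_of_dvd_mul_right
      (dvd_trans (dvd_mul_right u' v') hassoc.symm.dvd)
    have huu : u = u' := pos_unique (associated_of_dvd_dvd hd1 hd2) hu2 hu2'
    subst huu
    have hvv : v = v' := pos_unique
      (Associated.of_mul_left hassoc (Associated.refl u) hu2.ne_zero) hv2 hv2'
    rw [Prod.mk.injEq]
    exact ⟨rfl, hvv⟩
  · intro z hz
    rw [mem_sols] at hz
    obtain ⟨hz1, hz2⟩ := hz
    obtain ⟨u, hu, hun⟩ := exists_dvd_norm a b hab z hz1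
    obtain ⟨v, rfl⟩ := hu
    have hu0 : u ≠ 0 := by
      intro h; rw [h] at hun; rw [natNorm_eq_zero.2 rfl] at hun; omega
    have hv0 : v ≠ 0 := by
      intro h; rw [h, mul_zero] at hz2; exact hz2.ne_zero rfl
    have hvn : natNorm v = b := by
      have := hz1; rw [natNorm_mul, hun] at this
      exact Nat.eq_of_mul_eq_mul_left ha0 this
    refine ⟨(rep u, rep v), ?_, ?_⟩
    · rw [Finset.mem_product]
      exact ⟨hun ▸ rep_mem_sols hu0, hvn ▸ rep_mem_sols hv0⟩
    · have hi : Associated (rep u * rep v) (u * v) :=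
        ((rep_spec hu0).1.symm.mul_mul (rep_spec hv0).1.symm)
      exact rep_eq hi hz2

lemma assoc_unit_mul (z u : GI) (hu : IsUnit u) : Associated z (u * z) := by
  rw [mul_comm]; exact assoc_mul_unit z u hu

lemma ii_pow_inj : ∀ j : Fin 4, ∀ k : Fin 4, ii ^ (j : ℕ) = ii ^ (k : ℕ) → j = k := by decide

lemma unit_eq_ii_pow {u : GI} (h : IsUnit u) : ∃ j : Fin 4, u = ii ^ (j : ℕ) := by
  rcases units_eq h with rfl | rfl | rfl | rfl
  · exact ⟨0, by norm_num⟩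
  · exact ⟨2, by decide⟩
  · exact ⟨1, by norm_num⟩
  · exact ⟨3, by decide⟩

lemma allSols_card (N : ℕ) (hN : N ≠ 0) : (allSols N).card = 4 * H N := by
  rw [H, show (4 : ℕ) = (Finset.univ : Finset (Fin 4)).card by simp, ← Finset.card_product]
  symm
  apply Finset.card_bij (fun p _ => ii ^ (p.1 : ℕ) * p.2)
  · rintro ⟨j, w⟩ hp
    rw [Finset.mem_product, mem_sols] at hp
    rw [mem_allSols, natNorm_mul, ← hp.2.1]
    have : natNorm (ii ^ (j : ℕ)) = 1 := natNorm_eq_one_iff.2 (isUnit_ii.pow _)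
    rw [this, one_mul]
  · rintro ⟨j, w⟩ hp ⟨k, w'⟩ hp' heq
    rw [Finset.mem_product, mem_sols] at hp hp'
    have hassoc : Associated w w' := by
      have h1 : Associated w (ii ^ (j : ℕ) * w) := assoc_unit_mul w _ (isUnit_ii.pow _)
      have h2 : Associated (ii ^ (k : ℕ) * w') w' := (assoc_unit_mul w' _ (isUnit_ii.pow _)).symm
      rw [heq] at h1; exact h1.trans h2
    have hww : w = w' := pos_unique hassoc hp.2.2 hp'.2.2
    subst hww
    have hj : ii ^ (j : ℕ) = ii ^ (k : ℕ) :=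
      mul_right_cancel₀ hp.2.2.ne_zero heq
    rw [Prod.mk.injEq]
    exact ⟨ii_pow_inj _ _ hj, rfl⟩
  · intro z hz
    rw [mem_allSols] at hz
    have hz0 : z ≠ 0 := fun h => hN (by rw [← hz, h, natNorm_eq_zero.2 rfl])
    obtain ⟨ha, hpos⟩ := rep_spec hz0
    obtain ⟨u, hu⟩ := ha
    obtain ⟨j, hj⟩ := unit_eq_ii_pow (u⁻¹ : Units GI).isUnit
    have hz' : (↑(u⁻¹ : Units GI) : GI) * rep z = z := by
      rw [← hu, mul_comm, mul_assoc, Units.mul_inv, mul_one]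
    refine ⟨(j, rep z), ?_, ?_⟩
    · rw [Finset.mem_product, mem_sols]
      refine ⟨Finset.mem_univ _, ?_, hpos⟩
      rw [← hu, natNorm_mul, natNorm_eq_one_iff.2 u.isUnit, mul_one, hz]
    · rw [← hj]; exact hz'

lemma natNorm_pow (z : GI) (n : ℕ) : natNorm (z ^ n) = natNorm z ^ n := by
  induction n with
  | zero => simp [natNorm_one]
  | succ n ih => rw [pow_succ, pow_succ, natNorm_mul, ih]

lemma cast_dvd_mul_star {n p : ℕ} (hpn : p ∣ n) {z : GI} (hz : natNorm z = n) :
    ((p : ℕ) : GI) ∣ z * star z := by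
  have h1 : ((p : ℕ) : GI) ∣ ((n : ℕ) : GI) := Nat.cast_dvd_cast hpn
  have h2 : ((n : ℕ) : GI) = z * star z := by rw [← hz]; exact self_mul_star z
  rwa [h2] at h1

lemma sols_card_one {N : ℕ} (w₀ : GI) (hw0 : w₀ ≠ 0) (hw : natNorm w₀ = N)
    (huniq : ∀ z : GI, natNorm z = N → Associated z w₀) : H N = 1 := by
  have : sols N = {rep w₀} := by
    ext z
    rw [mem_sols, Finset.mem_singleton]
    constructor
    · rintro ⟨hz1, hz2⟩
      exact (rep_eq (huniq z hz1).symm hz2).symm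
    · rintro rfl
      have := rep_mem_sols hw0
      rwa [hw, mem_sols] at this
  rw [H, this, Finset.card_singleton]

/-- Case p ≡ 3 mod 4 -/
lemma assoc_pow_three {p : ℕ} (hp : p.Prime) (h3 : p % 4 = 3) :
    ∀ k, ∀ z : GI, natNorm z = p ^ k → ∃ m, k = 2 * m ∧ Associated z (((p : ℕ) : GI) ^ m) := by
  haveI : Fact p.Prime := ⟨hp⟩
  have hprime : Prime ((p : ℕ) : GI) :=
    GaussianInt.prime_of_nat_prime_of_mod_four_eq_three p h3
  intro k
  induction k using Nat.strong_induction_on with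
  | _ k IH =>
    intro z hz
    rcases k with _ | k
    · refine ⟨0, rfl, ?_⟩
      rw [pow_zero]
      exact associated_one_iff_isUnit.2 (natNorm_eq_one_iff.1 (by simpa using hz))
    have hdvd : ((p : ℕ) : GI) ∣ z * star z := cast_dvd_mul_star (dvd_pow_self p k.succ_ne_zero) hz
    have hpz : ((p : ℕ) : GI) ∣ z := by
      rcases hprime.2.2 _ _ hdvd with h | h
      · exact h
      · have := star_dvd h; rwa [star_natCast] at this
    obtain ⟨w, rfl⟩ := hpz
    have hnw : p * p * natNorm w = p ^ (k + 1) := by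
      rw [← hz, natNorm_mul, natNorm_natCast]
    rcases k with _ | k
    · exfalso
      have hw1 : p * (p * natNorm w) = p * 1 := by rw [← mul_assoc, hnw, pow_one, mul_one]
      have := Nat.eq_of_mul_eq_mul_left hp.pos hw1
      have h2 := hp.two_le
      rcases Nat.eq_zero_or_pos (natNorm w) with h0 | h0 <;> nlinarith
    · have hnw' : natNorm w = p ^ k := by
        have : p * p * natNorm w = p * p * p ^ k := by rw [hnw]; ring
        exact Nat.eq_of_mul_eq_mul_left (Nat.mul_pos hp.pos hp.pos) this
      obtain ⟨m, hm, hassoc⟩ := IH k (by omega) w hnw'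
      refine ⟨m + 1, by omega, ?_⟩
      have he : ((p : ℕ) : GI) * ((p : ℕ) : GI) ^ m = ((p : ℕ) : GI) ^ (m + 1) := by ring
      exact he ▸ Associated.mul_left _ hassoc

def pii : GI := ⟨1, 1⟩

lemma pii_natNorm : natNorm pii = 2 := by decide

lemma pii_prime : Prime pii := prime_of_natNorm_prime (by rw [pii_natNorm]; exact Nat.prime_two)

/-- Case p = 2 -/
lemma assoc_pow_two : ∀ k, ∀ z : GI, natNorm z = 2 ^ k → Associated z (pii ^ k) := by
  intro k
  induction k using Nat.strong_induction_on with
  | _ k IH =>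
    intro z hz
    rcases k with _ | k
    · rw [pow_zero]
      exact associated_one_iff_isUnit.2 (natNorm_eq_one_iff.1 (by simpa using hz))
    have hdvd2 : ((2 : ℕ) : GI) ∣ z * star z := cast_dvd_mul_star (dvd_pow_self 2 k.succ_ne_zero) hz
    have hdvd : pii ∣ z * star z := by
      refine dvd_trans ⟨star pii, ?_⟩ hdvd2
      rw [← pii_natNorm]; exact self_mul_star pii
    have hpz : pii ∣ z := by
      rcases pii_prime.2.2 _ _ hdvd with h | h
      · exact h
      · have h2 := star_dvd h
        exact dvd_trans ⟨-ii, by decide⟩ h2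
    obtain ⟨w, rfl⟩ := hpz
    have hnw : 2 * natNorm w = 2 * 2 ^ k := by
      rw [← pii_natNorm, ← natNorm_mul, hz, pii_natNorm, pow_succ]; ring
    have hnw' : natNorm w = 2 ^ k := Nat.eq_of_mul_eq_mul_left (by norm_num) hnw
    have := IH k (by omega) w hnw'
    have he : pii * pii ^ k = pii ^ (k + 1) := by ring
    exact he ▸ Associated.mul_left _ this

section POne

variable {p : ℕ} (hp : p.Prime) (h1 : p % 4 = 1) {π : GI} (hπ : natNorm π = p)

include hp h1 hπ

lemma pone_not_assoc : ¬Associated π (star π) := by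
  rintro ⟨u, hu⟩
  have hπ2 : (p : ℤ) = π.re ^ 2 + π.im ^ 2 := by rw [← hπ, natNorm_eq]
  have hodd : p % 2 = 1 := by omega
  have h2le := hp.two_le
  have hnotsq : ∀ a : ℤ, (p : ℤ) = a ^ 2 → False := by
    intro a ha
    have h3 : p = a.natAbs * a.natAbs := by
      have h2 : (p : ℤ) = ((a.natAbs * a.natAbs : ℕ) : ℤ) := by
        rw [ha]; push_cast [Int.natAbs_mul_self]; ring_nf; rw [sq_abs]
      exact_mod_cast h2
    rcases hp.eq_one_or_self_of_dvd a.natAbs ⟨a.natAbs, h3⟩ with h4 | h4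
    · rw [h4] at h3; omega
    · rw [h4] at h3; nlinarith
  have hnot2 : ∀ a : ℤ, (p : ℤ) = 2 * a ^ 2 → False := by
    intro a ha
    have h3 : p = 2 * (a.natAbs * a.natAbs) := by
      have h2 : (p : ℤ) = ((2 * (a.natAbs * a.natAbs) : ℕ) : ℤ) := by
        rw [ha]; push_cast [Int.natAbs_mul_self]; ring_nf; rw [sq_abs]
      exact_mod_cast h2
    omega
  rcases units_eq u.isUnit with h | h | h | h <;> rw [h] at hu
  · have him : π.im = 0 := by
      have := congrArg Zsqrtd.im hu
      rw [mul_one, Zsqrtd.im_star] at this; omega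
    exact hnotsq π.re (by rw [hπ2, him]; ring)
  · have hre : π.re = 0 := by
      have := congrArg Zsqrtd.re hu
      rw [mul_neg_one, Zsqrtd.re_neg, Zsqrtd.re_star] at this; omega
    exact hnotsq π.im (by rw [hπ2, hre]; ring)
  · have he : -π.im = π.re := by
      have := congrArg Zsqrtd.re hu
      rw [mul_re', ii_re, ii_im, Zsqrtd.re_star] at this
      simpa using this
    exact hnot2 π.im (by linear_combination hπ2 + (π.im - π.re) * he)
  · have he : π.re = π.im := by
      have := congrArg Zsqrtd.im hu
      rw [mul_neg, Zsqrtd.im_neg, mul_im', ii_re, ii_im, Zsqrtd.im_star] at this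
      simp at this; omega
    exact hnot2 π.im (by linear_combination hπ2 + (π.re + π.im) * he)

lemma pone_assoc_pow :
    ∀ k, ∀ z : GI, natNorm z = p ^ k →
      ∃ j, j ≤ k ∧ Associated z (π ^ j * (star π) ^ (k - j)) := by
  have hπp : Prime π := prime_of_natNorm_prime (by rw [hπ]; exact hp)
  have hsπp : Prime (star π) := prime_of_natNorm_prime (by rw [natNorm_conj, hπ]; exact hp)
  intro k
  induction k using Nat.strong_induction_on with
  | _ k IH =>
    intro z hz
    rcases k with _ | k
    · refine ⟨0, le_refl 0, ?_⟩
      simp only [pow_zero, Nat.zero_sub, mul_one]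
      exact associated_one_iff_isUnit.2 (natNorm_eq_one_iff.1 (by simpa using hz))
    have hdvdp : ((p : ℕ) : GI) ∣ z * star z :=
      cast_dvd_mul_star (dvd_pow_self p k.succ_ne_zero) hz
    have hππ : ((p : ℕ) : GI) = π * star π := by
      rw [← hπ]; exact self_mul_star π
    have hdvd : π ∣ z * star z := dvd_trans ⟨star π, hππ⟩ hdvdp
    rcases hπp.2.2 _ _ hdvd with hcase | hcase
    · obtain ⟨w, rfl⟩ := hcase
      have hnw : natNorm w = p ^ k := by
        have h5 : p * natNorm w = p * p ^ k := by
          rw [← hπ, ← natNorm_mul, hz, hπ, pow_succ]; ring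
        exact Nat.eq_of_mul_eq_mul_left hp.pos h5
      obtain ⟨j, hj, hassoc⟩ := IH k (by omega) w hnw
      refine ⟨j + 1, by omega, ?_⟩
      have he : π * (π ^ j * (star π) ^ (k - j)) = π ^ (j + 1) * (star π) ^ (k + 1 - (j + 1)) := by
        rw [show k + 1 - (j + 1) = k - j by omega]; ring
      exact he ▸ Associated.mul_left _ hassoc
    · obtain ⟨w, rfl⟩ := star_dvd hcase
      have hnw : natNorm w = p ^ k := by
        have h5 : p * natNorm w = p * p ^ k := by
          rw [← hπ, ← natNorm_conj π, ← natNorm_mul, hz, natNorm_conj, hπ, pow_succ]; ring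
        exact Nat.eq_of_mul_eq_mul_left hp.pos h5
      obtain ⟨j, hj, hassoc⟩ := IH k (by omega) w hnw
      refine ⟨j, by omega, ?_⟩
      have he : star π * (π ^ j * (star π) ^ (k - j)) = π ^ j * (star π) ^ (k + 1 - j) := by
        rw [show k + 1 - j = (k - j) + 1 by omega]; ring
      exact he ▸ Associated.mul_left _ hassoc

lemma pone_pow_inj {k j j' : ℕ} (hj : j ≤ k) (hj' : j' ≤ k)
    (h : Associated (π ^ j * (star π) ^ (k - j)) (π ^ j' * (star π) ^ (k - j'))) : j = j' := by
  have hπp : Prime π := prime_of_natNorm_prime (by rw [hπ]; exact hp)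
  have hsπp : Prime (star π) := prime_of_natNorm_prime (by rw [natNorm_conj, hπ]; exact hp)
  have hns := pone_not_assoc hp h1 hπ
  have key : ∀ a b : ℕ, a ≤ k → b ≤ k →
      Associated (π ^ a * (star π) ^ (k - a)) (π ^ b * (star π) ^ (k - b)) → a < b → False := by
    intro a b ha hb hab hlt
    have hrw : π ^ b * (star π) ^ (k - b) = π ^ a * (π ^ (b - a) * (star π) ^ (k - b)) := by
      rw [← mul_assoc, ← pow_add, Nat.add_sub_cancel' (le_of_lt hlt)]
    rw [hrw] at hab
    have hcancel : Associated ((star π) ^ (k - a)) (π ^ (b - a) * (star π) ^ (k - b)) :=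
      Associated.of_mul_left hab (Associated.refl (π ^ a)) (pow_ne_zero _ hπp.ne_zero)
    have hdvd : π ∣ (star π) ^ (k - a) := by
      have h6 : π ∣ π ^ (b - a) * (star π) ^ (k - b) :=
        dvd_mul_of_dvd_left (dvd_pow_self π (by omega)) _
      exact h6.trans hcancel.symm.dvd
    have hdvd2 : π ∣ star π := hπp.dvd_of_dvd_pow hdvd
    obtain ⟨c, hc⟩ := hdvd2
    rcases hsπp.irreducible.isUnit_or_isUnit hc with hcu | hcu
    · exact hπp.not_unit hcu
    · exact hns ⟨hcu.unit, by rw [IsUnit.unit_spec, ← hc]⟩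
  rcases lt_trichotomy j j' with hlt | heq | hlt
  · exact absurd (key j j' hj hj' h hlt) id
  · exact heq
  · exact absurd (key j' j hj' hj h.symm hlt) id

end POne

lemma H_two_pow (k : ℕ) : H (2 ^ k) = 1 :=
  sols_card_one (pii ^ k) (pow_ne_zero _ pii_prime.ne_zero)
    (by rw [natNorm_pow, pii_natNorm]) (assoc_pow_two k)

lemma cast_prime_ne_zero {p : ℕ} (hp : p.Prime) : ((p : ℕ) : GI) ≠ 0 := by
  intro h
  have := natNorm_eq_zero.2 h
  rw [natNorm_natCast] at this
  nlinarith [hp.two_le]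

lemma H_three_pow_even {p : ℕ} (hp : p.Prime) (h3 : p % 4 = 3) (m : ℕ) :
    H (p ^ (2 * m)) = 1 := by
  refine sols_card_one (((p : ℕ) : GI) ^ m) (pow_ne_zero _ (cast_prime_ne_zero hp)) ?_ ?_
  · rw [natNorm_pow, natNorm_natCast, ← pow_two, ← pow_mul]
  · intro z hz
    obtain ⟨m', hm', hassoc⟩ := assoc_pow_three hp h3 (2 * m) z hz
    have : m' = m := by omega
    rwa [this] at hassoc

lemma H_three_pow_odd {p : ℕ} (hp : p.Prime) (h3 : p % 4 = 3) (m : ℕ) :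
    H (p ^ (2 * m + 1)) = 0 := by
  rw [H, Finset.card_eq_zero]
  ext z
  simp only [mem_sols, Finset.notMem_empty, iff_false, not_and]
  intro hz _
  obtain ⟨m', hm', _⟩ := assoc_pow_three hp h3 (2 * m + 1) z hz
  omega

lemma exists_pi {p : ℕ} (hp : p.Prime) (h3 : p % 4 ≠ 3) : ∃ π : GI, natNorm π = p := by
  haveI : Fact p.Prime := ⟨hp⟩
  obtain ⟨s, t, hst⟩ := Nat.Prime.sq_add_sq h3
  refine ⟨⟨(s : ℤ), (t : ℤ)⟩, ?_⟩
  have h := natNorm_eq (⟨(s : ℤ), (t : ℤ)⟩ : GI)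
  have h2 : ((s : ℤ)) ^ 2 + ((t : ℤ)) ^ 2 = (p : ℤ) := by exact_mod_cast hst
  exact_mod_cast h.trans h2

lemma H_one_pow {p : ℕ} (hp : p.Prime) (h1 : p % 4 = 1) (k : ℕ) : H (p ^ k) = k + 1 := by
  obtain ⟨π, hπ⟩ := exists_pi hp (by omega)
  have hπp : Prime π := prime_of_natNorm_prime (by rw [hπ]; exact hp)
  have hsπp : Prime (star π) := prime_of_natNorm_prime (by rw [natNorm_conj, hπ]; exact hp)
  have hnatN : ∀ j, j ≤ k → natNorm (π ^ j * (star π) ^ (k - j)) = p ^ k := by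
    intro j hj
    rw [natNorm_mul, natNorm_pow, natNorm_pow, natNorm_conj, hπ, ← pow_add,
      Nat.add_sub_cancel' hj]
  have hne : ∀ j, (π ^ j * (star π) ^ (k - j)) ≠ 0 := fun j =>
    mul_ne_zero (pow_ne_zero _ hπp.ne_zero) (pow_ne_zero _ hsπp.ne_zero)
  have hcard := Finset.card_bij
    (fun (j : ℕ) (_ : j ∈ Finset.range (k + 1)) => rep (π ^ j * (star π) ^ (k - j)))
    (fun j hj => by
      rw [Finset.mem_range] at hj
      have := rep_mem_sols (hne j)
      rwa [hnatN j (by omega)] at this)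
    (fun j hj j' hj' heq => by
      rw [Finset.mem_range] at hj hj'
      have heq' : rep (π ^ j * (star π) ^ (k - j)) = rep (π ^ j' * (star π) ^ (k - j')) := heq
      have h9 := (rep_spec (hne j')).1.symm
      rw [← heq'] at h9
      exact pone_pow_inj hp h1 hπ (by omega) (by omega) ((rep_spec (hne j)).1.trans h9))
    (fun z hz => by
      rw [mem_sols] at hz
      obtain ⟨j, hj, hassoc⟩ := pone_assoc_pow hp h1 hπ k z hz.1
      exact ⟨j, Finset.mem_range.2 (by omega), rep_eq hassoc.symm hz.2⟩)
  rw [Finset.card_range] at hcard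
  rw [H, ← hcard]

/-! ### χ₄ and the divisor-sum identity -/

def chi (n : ℕ) : ℤ := if n % 4 = 1 then 1 else if n % 4 = 3 then -1 else 0

lemma chi_mul (m n : ℕ) : chi (m * n) = chi m * chi n := by
  have hm : m % 4 = 0 ∨ m % 4 = 1 ∨ m % 4 = 2 ∨ m % 4 = 3 := by omega
  have hn : n % 4 = 0 ∨ n % 4 = 1 ∨ n % 4 = 2 ∨ n % 4 = 3 := by omega
  rcases hm with hm | hm | hm | hm <;> rcases hn with hn | hn | hn | hn <;>
    simp [chi, Nat.mul_mod, hm, hn]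

noncomputable def Hfun : ArithmeticFunction ℤ := ⟨fun n => (H n : ℤ), by simp [H_zero]⟩

def chifun : ArithmeticFunction ℤ := ⟨fun n => chi n, by simp [chi]⟩

lemma chi_two_pow {j : ℕ} (hj : j ≠ 0) : chi (2 ^ j) = 0 := by
  rcases j with _ | _ | j
  · omega
  · decide
  · have h4 : 2 ^ (j + 2) % 4 = 0 := by
      have : (4 : ℕ) ∣ 2 ^ (j + 2) := ⟨2 ^ j, by ring⟩
      omega
    simp [chi, h4]

lemma chi_pow_one {q : ℕ} (h1 : q % 4 = 1) (j : ℕ) : chi (q ^ j) = 1 := by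
  have : q ^ j % 4 = 1 := by
    rw [Nat.pow_mod, h1, one_pow]
    norm_num
  unfold chi
  rw [this]
  norm_num

lemma chi_pow_three {q : ℕ} (h3 : q % 4 = 3) :
    ∀ j, chi (q ^ j) = if Even j then 1 else -1 := by
  have key : ∀ j, q ^ j % 4 = if Even j then 1 else 3 := by
    intro j
    induction j with
    | zero => simp
    | succ j ih =>
      rw [pow_succ, Nat.mul_mod, ih, h3]
      rcases Nat.even_or_odd j with h | h
      · simp [h, Nat.even_add_one]
      · simp [Nat.not_even_iff_odd.2 h, Nat.even_add_one]
  intro j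
  rcases Nat.even_or_odd j with h | h
  · simp [chi, key j, h]
  · simp [chi, key j, h, Nat.not_even_iff_odd.2 h]

lemma sum_chi_three {q : ℕ} (h3 : q % 4 = 3) (i : ℕ) :
    ∑ j ∈ Finset.range (i + 1), chi (q ^ j) = if Even i then 1 else 0 := by
  induction i with
  | zero => simp [chi]
  | succ i ih =>
    rw [Finset.sum_range_succ, ih, chi_pow_three h3]
    rcases Nat.even_or_odd i with h | h
    · simp [h, Nat.even_add_one]
    · simp [Nat.not_even_iff_odd.2 h, Nat.even_add_one]

theorem Hfun_eq : Hfun = ↑ArithmeticFunction.zeta * chifun := by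
  have hH : Hfun.IsMultiplicative := by
    refine ⟨by simp [Hfun, H_one], @fun m n h => ?_⟩
    show ((H (m * n) : ℤ)) = (H m : ℤ) * (H n : ℤ)
    exact_mod_cast H_mul h
  have hchim : chifun.IsMultiplicative := ⟨by simp [chifun, chi], fun _ => chi_mul _ _⟩
  have hzchi : ((↑ArithmeticFunction.zeta : ArithmeticFunction ℤ) * chifun).IsMultiplicative :=
    (ArithmeticFunction.isMultiplicative_zeta.natCast).mul hchim
  rw [ArithmeticFunction.IsMultiplicative.eq_iff_eq_on_prime_powers _ hH _ hzchi]
  intro q i hq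
  have hL : Hfun (q ^ i) = (H (q ^ i) : ℤ) := rfl
  have hR : (↑ArithmeticFunction.zeta * chifun) (q ^ i) =
      ∑ j ∈ Finset.range (i + 1), chi (q ^ j) := by
    rw [ArithmeticFunction.coe_zeta_mul_apply, Nat.sum_divisors_prime_pow hq]
    exact Finset.sum_congr rfl (fun _ _ => rfl)
  rw [hL, hR]
  rcases hq.eq_two_or_odd with h2 | hodd
  · subst h2
    rw [H_two_pow]
    rw [Finset.sum_range_succ']
    simp only [pow_zero]
    rw [show chi 1 = 1 from rfl]
    have : ∀ j ∈ Finset.range i, chi (2 ^ (j + 1)) = 0 := fun j _ => chi_two_pow (by omega)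
    rw [Finset.sum_congr rfl this]
    simp
  · have h13 : q % 4 = 1 ∨ q % 4 = 3 := by omega
    rcases h13 with h1 | h3
    · rw [H_one_pow hq h1]
      have : ∀ j ∈ Finset.range (i + 1), chi (q ^ j) = 1 := fun j _ => chi_pow_one h1 j
      rw [Finset.sum_congr rfl this]
      simp
    · rw [sum_chi_three h3]
      rcases Nat.even_or_odd i with h | h
      · obtain ⟨m, rfl⟩ := h
        rw [show m + m = 2 * m by ring, H_three_pow_even hq h3]
        simp [show Even (2*m) from ⟨m, by ring⟩]
      · obtain ⟨m, rfl⟩ := h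
        rw [H_three_pow_odd hq h3]
        simp [Nat.even_add_one, Nat.even_mul]

theorem H_eq_sum_chi (N : ℕ) : (H N : ℤ) = ∑ d ∈ N.divisors, chi d := by
  have h0 : (H N : ℤ) = Hfun N := rfl
  rw [h0, Hfun_eq, ArithmeticFunction.coe_zeta_mul_apply]
  exact Finset.sum_congr rfl (fun _ _ => rfl)



/-! ### Analytic part -/

open Real

lemma tsum_pow_fiber {α : Type} {q : ℝ} (F : α → ℕ)
    (c : ℕ → Finset α) (hc : ∀ N a, a ∈ c N ↔ F a = N)
    (hsum : Summable fun a => q ^ F a) :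
    (∑' a, q ^ F a = ∑' N, ((c N).card : ℝ) * q ^ N) ∧
      Summable (fun N => ((c N).card : ℝ) * q ^ N) := by
  have hsig : Summable fun p : (Σ N : ℕ, {a // F a = N}) => q ^ F p.2.1 :=
    (Equiv.sigmaFiberEquiv F).summable_iff.2 hsum
  have hinner : ∀ N, ∑' (a : {a // F a = N}), q ^ F a.1 = ((c N).card : ℝ) * q ^ N := by
    intro N
    have h1 : ∀ a : {a // F a = N}, q ^ F a.1 = q ^ N := fun a => by rw [a.2]
    rw [tsum_congr h1, tsum_const]
    have h2 : Nat.card {a // F a = N} = (c N).card := by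
      rw [← Nat.card_eq_finsetCard (c N)]
      exact Nat.card_congr (Equiv.subtypeEquivRight (fun a => (hc N a).symm))
    rw [h2, nsmul_eq_mul]
  constructor
  · rw [← Equiv.tsum_eq (Equiv.sigmaFiberEquiv F) (fun a => q ^ F a)]
    have : ∀ p : (Σ N : ℕ, {a // F a = N}),
        q ^ F ((Equiv.sigmaFiberEquiv F) p) = q ^ F p.2.1 := fun p => rfl
    rw [tsum_congr this, hsig.tsum_sigma]
    exact tsum_congr hinner
  · exact (hsig.sigma).congr hinner



variable {x : ℝ}

lemma exp_neg_lt_one (hx : 0 < x) : Real.exp (-x) < 1 := by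
  have : Real.exp (-x) < Real.exp 0 := Real.exp_lt_exp.2 (by linarith)
  simpa using this

lemma summable_exp_nat (hx : 0 < x) : Summable (fun n : ℕ => Real.exp (-x * (n : ℝ) ^ 2)) := by
  refine Summable.of_nonneg_of_le (fun n => (Real.exp_pos _).le) (fun n => ?_)
    (summable_geometric_of_lt_one (Real.exp_pos (-x)).le (exp_neg_lt_one hx))
  rw [← Real.exp_nat_mul]
  apply Real.exp_le_exp.2
  have h1 : (n : ℝ) ≤ (n : ℝ) ^ 2 := by
    have h2 : n ≤ n ^ 2 := Nat.le_self_pow two_ne_zero n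
    exact_mod_cast h2
  nlinarith

lemma summable_exp_int (hx : 0 < x) : Summable (fun n : ℤ => Real.exp (-x * (n : ℝ) ^ 2)) := by
  refine Summable.of_nat_of_neg ?_ ?_ <;>
    [skip; simp only [Int.cast_neg, neg_sq]] <;>
    exact (summable_exp_nat hx).congr (fun n => by norm_num)

lemma summable_norm_exp_int (hx : 0 < x) :
    Summable (fun n : ℤ => ‖Real.exp (-x * (n : ℝ) ^ 2)‖) :=
  (summable_exp_int hx).congr (fun n => by rw [Real.norm_eq_abs, Real.abs_exp])

def e2 : ℤ × ℤ ≃ GI :=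
  ⟨fun p => ⟨p.1, p.2⟩, fun z => (z.re, z.im), fun p => rfl, fun z => rfl⟩

lemma q_pow_natNorm (z : GI) :
    Real.exp (-x) ^ natNorm z =
      Real.exp (-x * (z.re : ℝ) ^ 2) * Real.exp (-x * (z.im : ℝ) ^ 2) := by
  rw [← Real.exp_nat_mul, ← Real.exp_add]
  congr 1
  have hc : ((natNorm z : ℕ) : ℝ) = (z.re : ℝ) ^ 2 + (z.im : ℝ) ^ 2 := by
    have := natNorm_eq z
    have h2 := congrArg (Int.cast : ℤ → ℝ) this
    push_cast at h2 ⊢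
    linarith
  rw [hc]; ring

lemma summable_q_natNorm (hx : 0 < x) :
    Summable (fun z : GI => Real.exp (-x) ^ natNorm z) := by
  rw [← Equiv.summable_iff e2]
  have h := summable_mul_of_summable_norm (summable_norm_exp_int hx) (summable_norm_exp_int hx)
  exact h.congr (fun p => (q_pow_natNorm (e2 p)).symm)

lemma theta_sq (hx : 0 < x) :
    (∑' n : ℤ, Real.exp (-x * (n : ℝ) ^ 2)) ^ 2 =
      ∑' N : ℕ, ((allSols N).card : ℝ) * Real.exp (-x) ^ N := by
  have h1 : (∑' n : ℤ, Real.exp (-x * (n : ℝ) ^ 2)) ^ 2 =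
      ∑' z : GI, Real.exp (-x) ^ natNorm z := by
    rw [sq, tsum_mul_tsum_of_summable_norm (summable_norm_exp_int hx) (summable_norm_exp_int hx),
      ← Equiv.tsum_eq e2 (fun z => Real.exp (-x) ^ natNorm z)]
    exact tsum_congr fun p => (q_pow_natNorm (e2 p)).symm
  rw [h1]
  exact (tsum_pow_fiber natNorm allSols (fun N a => mem_allSols) (summable_q_natNorm hx)).1

def dFin (r N : ℕ) : Finset (ℕ × ℕ) :=
  (Finset.range N ×ˢ Finset.range N).filter fun p => (4 * p.1 + r) * (p.2 + 1) = N

lemma mem_dFin {r N : ℕ} (hr : 1 ≤ r) {p : ℕ × ℕ} :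
    p ∈ dFin r N ↔ (4 * p.1 + r) * (p.2 + 1) = N := by
  rw [dFin, Finset.mem_filter, Finset.mem_product, Finset.mem_range, Finset.mem_range]
  refine ⟨fun h => h.2, fun h => ⟨⟨?_, ?_⟩, h⟩⟩
  · have h1 : 4 * p.1 + r ≤ N := by
      calc 4 * p.1 + r = (4 * p.1 + r) * 1 := by ring
      _ ≤ (4 * p.1 + r) * (p.2 + 1) := Nat.mul_le_mul_left _ (by omega)
      _ = N := h
    omega
  · have h2 : p.2 + 1 ≤ N := by
      calc p.2 + 1 = 1 * (p.2 + 1) := by ring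
      _ ≤ (4 * p.1 + r) * (p.2 + 1) := Nat.mul_le_mul_right _ (by omega)
      _ = N := h
    omega

lemma summable_geo_prod (hx : 0 < x) :
    Summable (fun p : ℕ × ℕ => Real.exp (-x) ^ p.1 * Real.exp (-x) ^ p.2) := by
  have hgeo : Summable (fun n : ℕ => ‖Real.exp (-x) ^ n‖) := by
    refine (summable_geometric_of_lt_one (Real.exp_pos (-x)).le (exp_neg_lt_one hx)).congr
      (fun n => ?_)
    rw [norm_pow, Real.norm_eq_abs, Real.abs_exp]
  exact summable_mul_of_summable_norm hgeo hgeo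

lemma summable_dsum (hx : 0 < x) (r : ℕ) (hr : 1 ≤ r) :
    Summable (fun p : ℕ × ℕ => Real.exp (-x) ^ ((4 * p.1 + r) * (p.2 + 1))) := by
  have hq0 := (Real.exp_pos (-x)).le
  have hq1 := (exp_neg_lt_one hx).le
  refine Summable.of_nonneg_of_le (fun p => pow_nonneg hq0 _) (fun p => ?_)
    ((summable_geo_prod hx).congr (fun p => (pow_add _ _ _).symm))
  exact pow_le_pow_of_le_one hq0 hq1 (by nlinarith)

lemma lambert_term (hx : 0 < x) {d : ℕ} (hd : d ≠ 0) :
    Real.exp (-x) ^ d / (1 - Real.exp (-x) ^ d) = ∑' k : ℕ, Real.exp (-x) ^ (d * (k + 1)) := by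
  set q := Real.exp (-x) with hq
  have hq0 := (Real.exp_pos (-x)).le
  have hqd1 : q ^ d < 1 := pow_lt_one₀ hq0 (exp_neg_lt_one hx) hd
  have h1 : ∀ k : ℕ, q ^ (d * (k + 1)) = q ^ d * (q ^ d) ^ k := by
    intro k
    rw [pow_mul, pow_succ']
  rw [tsum_congr h1, tsum_mul_left, tsum_geometric_of_lt_one (pow_nonneg hq0 d) hqd1,
    div_eq_mul_inv]

lemma summable_lambert (hx : 0 < x) (r : ℕ) (hr : 1 ≤ r) :
    Summable (fun n : ℕ =>
      Real.exp (-x) ^ (4 * n + r) / (1 - Real.exp (-x) ^ (4 * n + r))) := by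
  set q := Real.exp (-x) with hq
  have hq0 := (Real.exp_pos (-x)).le
  have hq1 := exp_neg_lt_one hx
  have hd1 : (0 : ℝ) < 1 - q := by linarith
  refine Summable.of_nonneg_of_le (fun n => ?_) (fun n => ?_)
    ((summable_geometric_of_lt_one hq0 hq1).mul_left (1 / (1 - q)))
  · have h2 : q ^ (4 * n + r) ≤ 1 := pow_le_one₀ hq0 hq1.le
    have h3 : q ^ (4 * n + r) < 1 := pow_lt_one₀ hq0 hq1 (by omega)
    exact div_nonneg (pow_nonneg hq0 _) (by linarith)
  · have hd2 : 1 - q ≤ 1 - q ^ (4 * n + r) := by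
      have h6 : q ^ (4 * n + r) ≤ q ^ 1 := pow_le_pow_of_le_one hq0 hq1.le (by omega)
      rw [pow_one] at h6
      linarith
    have h5 : q ^ (4 * n + r) / (1 - q ^ (4 * n + r)) ≤ q ^ n / (1 - q) :=
      div_le_div₀ (pow_nonneg hq0 _) (pow_le_pow_of_le_one hq0 hq1.le (by omega)) hd1 hd2
    calc q ^ (4 * n + r) / (1 - q ^ (4 * n + r)) ≤ q ^ n / (1 - q) := h5
    _ = 1 / (1 - q) * q ^ n := by ring

lemma lambert_sum (hx : 0 < x) (r : ℕ) (hr : 1 ≤ r) :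
    (∑' n : ℕ, Real.exp (-x) ^ (4 * n + r) / (1 - Real.exp (-x) ^ (4 * n + r))) =
      ∑' N : ℕ, ((dFin r N).card : ℝ) * Real.exp (-x) ^ N := by
  have h1 : (∑' n : ℕ, Real.exp (-x) ^ (4 * n + r) / (1 - Real.exp (-x) ^ (4 * n + r))) =
      ∑' n : ℕ, ∑' k : ℕ, Real.exp (-x) ^ ((4 * n + r) * (k + 1)) :=
    tsum_congr (fun n => lambert_term hx (by omega))
  rw [h1, ← (summable_dsum hx r hr).tsum_prod]
  exact (tsum_pow_fiber (fun p : ℕ × ℕ => (4 * p.1 + r) * (p.2 + 1)) (dFin r)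
    (fun N a => mem_dFin hr) (summable_dsum hx r hr)).1

lemma summable_coeff (hx : 0 < x) (r : ℕ) (hr : 1 ≤ r) :
    Summable (fun N : ℕ => ((dFin r N).card : ℝ) * Real.exp (-x) ^ N) :=
  (tsum_pow_fiber (fun p : ℕ × ℕ => (4 * p.1 + r) * (p.2 + 1)) (dFin r)
    (fun N a => mem_dFin hr) (summable_dsum hx r hr)).2

lemma sum_chi_split (N : ℕ) :
    ∑ d ∈ N.divisors, chi d =
      (((N.divisors.filter (fun d => d % 4 = 1)).card : ℤ) -
        ((N.divisors.filter (fun d => d % 4 = 3)).card : ℤ)) := by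
  have h : ∀ d, chi d = (if d % 4 = 1 then (1 : ℤ) else 0) - (if d % 4 = 3 then 1 else 0) := by
    intro d
    unfold chi
    have : d % 4 = 0 ∨ d % 4 = 1 ∨ d % 4 = 2 ∨ d % 4 = 3 := by omega
    rcases this with h | h | h | h <;> simp [h]
  rw [Finset.sum_congr rfl (fun d _ => h d), Finset.sum_sub_distrib,
    Finset.sum_boole, Finset.sum_boole]

lemma dFin_card_eq {r : ℕ} (hr : r = 1 ∨ r = 3) (N : ℕ) (hN : N ≠ 0) :
    (dFin r N).card = (N.divisors.filter (fun d => d % 4 = r)).card := by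
  apply Finset.card_bij (fun p _ => 4 * p.1 + r)
  · intro p hp
    rw [mem_dFin (by omega)] at hp
    rw [Finset.mem_filter, Nat.mem_divisors]
    exact ⟨⟨⟨p.2 + 1, hp.symm⟩, hN⟩, by omega⟩
  · intro p hp p' hp' heq
    rw [mem_dFin (by omega)] at hp hp'
    have h1 : p.1 = p'.1 := by omega
    have h2 : p.2 = p'.2 := by
      rw [← h1] at hp'
      have := hp.trans hp'.symm
      have h3 := Nat.eq_of_mul_eq_mul_left (show 0 < 4 * p.1 + r by omega) this
      omega
    exact Prod.ext h1 h2
  · intro d hd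
    rw [Finset.mem_filter, Nat.mem_divisors] at hd
    obtain ⟨⟨hdvd, _⟩, hmod⟩ := hd
    have hd0 : 0 < d := by omega
    have hNd : 0 < N / d := Nat.div_pos (Nat.le_of_dvd (Nat.pos_of_ne_zero hN) hdvd) hd0
    refine ⟨(d / 4, N / d - 1), ?_, by omega⟩
    rw [mem_dFin (by omega)]
    rw [show 4 * (d / 4) + r = d by omega, show N / d - 1 + 1 = N / d by omega]
    exact Nat.mul_div_cancel' hdvd

lemma allSols_zero : allSols 0 = {0} := by
  ext z
  rw [mem_allSols, Finset.mem_singleton, natNorm_eq_zero]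

lemma dFin_zero (r : ℕ) : dFin r 0 = ∅ := by
  rw [dFin]
  simp

lemma coeff_key (hx : 0 < x) (N : ℕ) :
    ((allSols N).card : ℝ) * Real.exp (-x) ^ N =
      ((if N = 0 then (1 : ℝ) else 0) * Real.exp (-x) ^ N +
        4 * (((dFin 1 N).card : ℝ) * Real.exp (-x) ^ N)) -
        4 * (((dFin 3 N).card : ℝ) * Real.exp (-x) ^ N) := by
  rcases eq_or_ne N 0 with rfl | hN
  · rw [allSols_zero, dFin_zero, dFin_zero]
    norm_num
  · have h1 : (H N : ℤ) = ((N.divisors.filter (fun d => d % 4 = 1)).card : ℤ) -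
        ((N.divisors.filter (fun d => d % 4 = 3)).card : ℤ) := by
      rw [H_eq_sum_chi, sum_chi_split]
    have h2 : ((allSols N).card : ℝ) =
        4 * ((dFin 1 N).card : ℝ) - 4 * ((dFin 3 N).card : ℝ) := by
      rw [allSols_card N hN, dFin_card_eq (Or.inl rfl) N hN, dFin_card_eq (Or.inr rfl) N hN]
      have h3 : ((H N : ℤ) : ℝ) = ((N.divisors.filter (fun d => d % 4 = 1)).card : ℝ) -
          ((N.divisors.filter (fun d => d % 4 = 3)).card : ℝ) := by
        rw [h1]; push_cast; ring
      push_cast at h3 ⊢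
      linarith
    rw [if_neg hN, h2]
    ring

lemma lambert_eq_coeff (hx : 0 < x) :
    1 + 4 * ((∑' n : ℕ, Real.exp (-x) ^ (4 * n + 1) / (1 - Real.exp (-x) ^ (4 * n + 1))) -
        (∑' n : ℕ, Real.exp (-x) ^ (4 * n + 3) / (1 - Real.exp (-x) ^ (4 * n + 3)))) =
      ∑' N : ℕ, ((allSols N).card : ℝ) * Real.exp (-x) ^ N := by
  have s_ite : Summable (fun N : ℕ => (if N = 0 then (1 : ℝ) else 0) * Real.exp (-x) ^ N) :=
    summable_of_ne_finset_zero (s := {0}) (fun N hN => by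
      rw [Finset.mem_singleton] at hN
      simp [hN])
  have s1 := summable_coeff hx 1 (by norm_num)
  have s3 := summable_coeff hx 3 (by norm_num)
  rw [tsum_congr (coeff_key hx), Summable.tsum_sub (s_ite.add (s1.mul_left 4)) (s3.mul_left 4),
    Summable.tsum_add s_ite (s1.mul_left 4), tsum_mul_left, tsum_mul_left]
  have hone : (∑' N : ℕ, (if N = 0 then (1 : ℝ) else 0) * Real.exp (-x) ^ N) = 1 := by
    rw [tsum_eq_single 0 (fun N hN => by simp [hN])]
    simp
  rw [hone, lambert_sum hx 1 (by norm_num), lambert_sum hx 3 (by norm_num)]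
  ring

end TwoSq

theorem lambert_eq_theta (x : ℝ) (hx : 0 < x) :
    x * (1 + 4 * ∑' n : ℕ,
        (Real.exp (-x) ^ (4 * (n + 1) - 3) / (1 - Real.exp (-x) ^ (4 * (n + 1) - 3)) -
          Real.exp (-x) ^ (4 * (n + 1) - 1) / (1 - Real.exp (-x) ^ (4 * (n + 1) - 1)))) =
      Real.pi * (∑' n : ℤ, Real.exp (-(Real.pi ^ 2 / x) * (n : ℝ) ^ 2)) ^ 2 := by
  open TwoSq Real in
  have hterm : ∀ n : ℕ,
      (Real.exp (-x) ^ (4 * (n + 1) - 3) / (1 - Real.exp (-x) ^ (4 * (n + 1) - 3)) -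
        Real.exp (-x) ^ (4 * (n + 1) - 1) / (1 - Real.exp (-x) ^ (4 * (n + 1) - 1))) =
      Real.exp (-x) ^ (4 * n + 1) / (1 - Real.exp (-x) ^ (4 * n + 1)) -
        Real.exp (-x) ^ (4 * n + 3) / (1 - Real.exp (-x) ^ (4 * n + 3)) := by
    intro n
    rw [show 4 * (n + 1) - 3 = 4 * n + 1 by omega, show 4 * (n + 1) - 1 = 4 * n + 3 by omega]
  rw [tsum_congr hterm,
    Summable.tsum_sub (TwoSq.summable_lambert hx 1 (by norm_num)) (TwoSq.summable_lambert hx 3 (by norm_num)),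
    TwoSq.lambert_eq_coeff hx, ← TwoSq.theta_sq hx]
  -- theta transformation
  have hπ : (0 : ℝ) < Real.pi := Real.pi_pos
  have ha : 0 < x / Real.pi := div_pos hx hπ
  have ht := Real.tsum_exp_neg_mul_int_sq ha
  have e1 : ∀ n : ℤ, Real.exp (-Real.pi * (x / Real.pi) * (n : ℝ) ^ 2) =
      Real.exp (-x * (n : ℝ) ^ 2) := by
    intro n
    rw [show -Real.pi * (x / Real.pi) = -x by field_simp]
  have e2 : ∀ n : ℤ, Real.exp (-Real.pi / (x / Real.pi) * (n : ℝ) ^ 2) =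
      Real.exp (-(Real.pi ^ 2 / x) * (n : ℝ) ^ 2) := by
    intro n
    rw [show -Real.pi / (x / Real.pi) = -(Real.pi ^ 2 / x) by rw [div_div_eq_mul_div]; ring]
  rw [tsum_congr e1, tsum_congr e2] at ht
  rw [ht]
  have h7 : ((x / Real.pi) ^ ((1 : ℝ) / 2)) ^ (2 : ℕ) = x / Real.pi := by
    rw [← Real.rpow_natCast ((x / Real.pi) ^ ((1 : ℝ) / 2)) 2, ← Real.rpow_mul ha.le]
    norm_num
  rw [mul_pow, one_div, inv_pow, h7, inv_div]
  field_simp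
end
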